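/- arXiv:2004.07309 — 2 statements merged into one kernel-verified Lean document; each statement's English description precedes it below -/
import Mathlib

section
/- Let M be a matching on {1,...,2n+2} containing {1,2}, and M' the matching on {1,...,2n} with {i,j} ∈ M' iff {i+2,j+2} ∈ M. Then the type DA bimodule MarkedMinHat, being U_rU_s-to-U_{r+2}U_{s+2} equivariant for all r,s and annihilated by U_1U_2, is μ_0^{M'}-μ_0^{M}-equivariant, and hence defines a curved type DA bimodule from the curved algebra (B(n+1), Σ_{{i,j}∈M} U_iU_j) to the curved algebra (B(n), Σ_{{i,j}∈M'} U_iU_j). -/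
open TensorProduct

noncomputable section

attribute [local instance] Classical.propDecidable

abbrev F2 := ZMod 2

/-- Contraction `B ⊗ (B ⊗ X) → B ⊗ X` using multiplication on `B`. -/
def ctr (B : Type) [Ring B] [Algebra F2 B] (X : Type) [AddCommGroup X] [Module F2 X] :
    B ⊗[F2] (B ⊗[F2] X) →ₗ[F2] B ⊗[F2] X :=
  (LinearMap.rTensor X (LinearMap.mul' F2 B)).comp
    (TensorProduct.assoc F2 B B X).symm.toLinearMap

/-- The data of the structure maps `δ¹_{k+1} : X ⊗ A^{⊗k} → B ⊗ X` of a type DA bimodule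
over the pair of algebras `(B, A)` (inputs from `A`, outputs in `B`). -/
def DAop (A B : Type) [Ring A] [Algebra F2 A] [Ring B] [Algebra F2 B]
    (X : Type) [AddCommGroup X] [Module F2 X] : Type :=
  (k : ℕ) → (Fin k → A) → (X →ₗ[F2] B ⊗[F2] X)

variable {A B : Type} [Ring A] [Algebra F2 A] [Ring B] [Algebra F2 B]
variable {X : Type} [AddCommGroup X] [Module F2 X]

/-- The composition terms of the DA structure relation: split the inputs in two,
apply the operation to the first batch, and feed its output into the operation on the
second batch, multiplying the two `B`-outputs. -/
def compSum (δ : DAop A B X) (k : ℕ) (a : Fin k → A) (x : X) : B ⊗[F2] X :=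
  ∑ i ∈ Finset.range (k + 1),
    if h : i ≤ k then
      (ctr B X) ((LinearMap.lTensor B
          (δ (k - i) (fun t => a ⟨i + t.1, by have := t.2; omega⟩)))
        ((δ i (fun t => a ⟨t.1, by have := t.2; omega⟩)) x))
    else 0

/-- The multiplication terms of the DA structure relation: multiply two consecutive
algebra inputs. -/
def mergeSum (δ : DAop A B X) (k : ℕ) (a : Fin k → A) (x : X) : B ⊗[F2] X :=
  match k, a with
  | 0, _ => 0
  | (m + 1), a =>
      ∑ j : Fin (m + 1), if j.1 < m then (δ m (Fin.contractNth j (· * ·) a)) x else 0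

/-- The type DA bimodule structure relation (over `F2`, with algebras having zero
differential). -/
def DARel (δ : DAop A B X) : Prop :=
  ∀ (k : ℕ) (a : Fin k → A) (x : X), compSum δ k a x + mergeSum δ k a x = 0

/-- `a`-`b`-equivariance of a type DA bimodule: feeding in the single input `a` gives
output `b ⊗ x`, and any higher operation with `a` among its inputs vanishes. -/
def Equivariant (δ : DAop A B X) (a : A) (b : B) : Prop :=
  (∀ x : X, (δ 1 (fun _ => a)) x = b ⊗ₜ[F2] x) ∧
  (∀ (k : ℕ) (v : Fin k → A) (x : X), 1 < k → (∃ i, v i = a) → (δ k v) x = 0)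

/-- The curved type DA bimodule structure relation, for curvatures `μA` on the input
algebra and `μB` on the output algebra. -/
def CurvedDARel (δ : DAop A B X) (μA : A) (μB : B) : Prop :=
  ∀ (k : ℕ) (a : Fin k → A) (x : X),
    compSum δ k a x + mergeSum δ k a x
      + (if k = 0 then μB ⊗ₜ[F2] x else 0)
      + ∑ j : Fin (k + 1), (δ (k + 1) (Fin.insertNth j μA a)) x = 0

/-!
Since the operations are additive in each input, `a`-`b`-equivariance is preserved under
sums of pairs `(a, b)`. The curvature `μ₀^M` is `U₁U₂` plus the shifts of the terms of `μ₀^{M'}`,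
so the bimodule is `μ₀^M`-to-`(0 + μ₀^{M'})` equivariant.
-/

def InputAdditive (δ : DAop A B X) : Prop :=
  ∀ (k : ℕ) (a : Fin k → A) (i : Fin k) (b c : A) (x : X),
    δ k (Function.update a i (b + c)) x
      = δ k (Function.update a i b) x + δ k (Function.update a i c) x

namespace InputAdditive

variable {δ : DAop A B X}

theorem map_update_zero (hδ : InputAdditive δ) (k : ℕ) (a : Fin k → A) (i : Fin k) (x : X) :
    δ k (Function.update a i 0) x = 0 := by
  have h := hδ k a i 0 0 x
  rwa [add_zero, left_eq_add] at h

theorem map_const_add (hδ : InputAdditive δ) (b c : A) (x : X) :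
    δ 1 (fun _ => b + c) x = δ 1 (fun _ => b) x + δ 1 (fun _ => c) x := by
  have h := hδ 1 0 0 b c x
  simp only [Function.update_eq_const_of_subsingleton] at h
  exact h

end InputAdditive

namespace Equivariant

variable {δ : DAop A B X}

theorem zero (hδ : InputAdditive δ) : Equivariant δ (0 : A) (0 : B) := by
  refine ⟨fun x => ?_, fun k v x _ ⟨i, hi⟩ => ?_⟩
  · have h := hδ.map_update_zero 1 0 0 x
    simp only [Function.update_eq_const_of_subsingleton] at h
    rw [zero_tmul]
    exact h
  · simpa only [← hi, Function.update_eq_self] using hδ.map_update_zero k v i x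

theorem add (hδ : InputAdditive δ) {a₁ a₂ : A} {b₁ b₂ : B}
    (h₁ : Equivariant δ a₁ b₁) (h₂ : Equivariant δ a₂ b₂) :
    Equivariant δ (a₁ + a₂) (b₁ + b₂) := by
  refine ⟨fun x => ?_, fun k v x hk ⟨i, hi⟩ => ?_⟩
  · rw [hδ.map_const_add, h₁.1, h₂.1, add_tmul]
  · rw [← Function.update_eq_self i v, hi, hδ, h₁.2 k _ x hk ⟨i, Function.update_self ..⟩,
      h₂.2 k _ x hk ⟨i, Function.update_self ..⟩, add_zero]

theorem sum {ι : Type*} (hδ : InputAdditive δ) {s : Finset ι} {f : ι → A} {g : ι → B}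
    (h : ∀ i ∈ s, Equivariant δ (f i) (g i)) :
    Equivariant δ (∑ i ∈ s, f i) (∑ i ∈ s, g i) := by
  induction s using Finset.cons_induction with
  | empty => simpa only [Finset.sum_empty] using zero hδ
  | cons i s hi ih =>
    rw [Finset.sum_cons, Finset.sum_cons]
    exact (h i (Finset.mem_cons_self i s)).add hδ
      (ih fun j hj => h j (Finset.mem_cons_of_mem hj))

/-- With no inputs, the curvature terms are `μB ⊗ x` and `δ¹₂(x, μA) = μB ⊗ x`, which cancel
in characteristic two; with inputs, every curvature term is a higher operation containing `μA`. -/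
theorem curvedDARel (hDA : DARel δ) {μA : A} {μB : B} (h : Equivariant δ μA μB) :
    CurvedDARel δ μA μB := by
  intro k a x
  rw [hDA k a x, zero_add]
  cases k with
  | zero =>
    have hins : ∀ j : Fin 1, Fin.insertNth j μA a = fun _ => μA := fun j =>
      funext fun t => by
        rw [Fin.fin_one_eq_zero t, Fin.fin_one_eq_zero j, Fin.insertNth_apply_same]
    rw [if_pos rfl, Fin.sum_univ_one, hins, h.1, ← two_smul F2,
      show (2 : F2) = 0 from rfl, zero_smul]
  | succ m =>
    rw [if_neg m.succ_ne_zero, zero_add]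
    exact Finset.sum_eq_zero fun j _ =>
      h.2 (m + 2) _ x (by omega) ⟨j, Fin.insertNth_apply_same ..⟩

end Equivariant

theorem erase_eq_map_addNat_two {m : ℕ} {M : Finset (Fin (m + 2) × Fin (m + 2))}
    {M' : Finset (Fin m × Fin m)} {p₀ : Fin (m + 2) × Fin (m + 2)} (hp₀ : p₀.1.1 < 2)
    (hM' : ∀ i j, (i, j) ∈ M' ↔ (i.addNat 2, j.addNat 2) ∈ M)
    (hM : ∀ p ∈ M, p = p₀ ∨ 2 ≤ p.1.1 ∧ 2 ≤ p.2.1) :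
    M.erase p₀ = M'.map ((Fin.addNatEmb 2).prodMap (Fin.addNatEmb 2)) := by
  ext ⟨a, b⟩
  simp only [Finset.mem_erase, Finset.mem_map, Prod.exists, Function.Embedding.coe_prodMap,
    Prod.map, Fin.addNatEmb_apply, Prod.mk.injEq, hM']
  constructor
  · rintro ⟨hne, hab⟩
    obtain ⟨ha, hb⟩ := (hM _ hab).resolve_left hne
    have ha' : (⟨a - 2, by omega⟩ : Fin m).addNat 2 = a := Fin.ext (Nat.sub_add_cancel ha)
    have hb' : (⟨b - 2, by omega⟩ : Fin m).addNat 2 = b := Fin.ext (Nat.sub_add_cancel hb)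
    exact ⟨_, _, by rwa [ha', hb'], ha', hb'⟩
  · rintro ⟨i, j, hij, rfl, rfl⟩
    exact ⟨fun h => by simp [← h] at hp₀, hij⟩

theorem sum_eq_add_sum_addNat_two {β : Type*} [AddCommMonoid β] {m : ℕ}
    {M : Finset (Fin (m + 2) × Fin (m + 2))} {M' : Finset (Fin m × Fin m)}
    {p₀ : Fin (m + 2) × Fin (m + 2)} (hp₀M : p₀ ∈ M) (hp₀ : p₀.1.1 < 2)
    (hM' : ∀ i j, (i, j) ∈ M' ↔ (i.addNat 2, j.addNat 2) ∈ M)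
    (hM : ∀ p ∈ M, p = p₀ ∨ 2 ≤ p.1.1 ∧ 2 ≤ p.2.1) (w : Fin (m + 2) × Fin (m + 2) → β) :
    ∑ p ∈ M, w p = w p₀ + ∑ q ∈ M', w (q.1.addNat 2, q.2.addNat 2) := by
  rw [← Finset.add_sum_erase M w hp₀M, erase_eq_map_addNat_two hp₀ hM' hM, Finset.sum_map]
  rfl

/-- let `M` be a matching on `{1,…,2n+2}` containing `{1,2}` and `M'` the
induced matching on `{1,…,2n}` (shifted down by two).  A type DA bimodule (such as
`MarkedMinHat`) which is `U_rU_s`-to-`U'_{r}U'_{s}` equivariant for all `r,s` and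
annihilated by `U₁U₂`, and whose operations are additive in each algebra input, is
`μ₀^{M}`-to-`μ₀^{M'}` equivariant, and hence satisfies the curved type DA bimodule
structure relations for the curvatures `μ₀^M = Σ_{{i,j}∈M} U_iU_j` and
`μ₀^{M'} = Σ_{{i,j}∈M'} U'_iU'_j`. -/
theorem stmt_8 (n : ℕ)
    {X : Type} [AddCommGroup X] [Module F2 X]
    {B1 B2 : Type} [Ring B1] [Algebra F2 B1] [Ring B2] [Algebra F2 B2]
    (δ : DAop B1 B2 X)
    (U : Fin (2 * n + 2) → B1) (U' : Fin (2 * n) → B2)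
    (M : Finset (Fin (2 * n + 2) × Fin (2 * n + 2)))
    (M' : Finset (Fin (2 * n) × Fin (2 * n)))
    (h01 : (⟨0, by omega⟩, ⟨1, by omega⟩) ∈ M)
    (hM' : ∀ i j : Fin (2 * n), (i, j) ∈ M' ↔
      ((⟨i.1 + 2, by have := i.2; omega⟩ : Fin (2 * n + 2)),
       (⟨j.1 + 2, by have := j.2; omega⟩ : Fin (2 * n + 2))) ∈ M)
    (hMform : ∀ p ∈ M,
      p = ((⟨0, by omega⟩ : Fin (2 * n + 2)), (⟨1, by omega⟩ : Fin (2 * n + 2))) ∨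
      (2 ≤ p.1.1 ∧ 2 ≤ p.2.1))
    (hDA : DARel δ)
    (hadd : ∀ (k : ℕ) (a : Fin k → B1) (i : Fin k) (b c : B1) (x : X),
      (δ k (Function.update a i (b + c))) x
        = (δ k (Function.update a i b)) x + (δ k (Function.update a i c)) x)
    (hEq : ∀ r s : Fin (2 * n),
      Equivariant δ
        (U ⟨r.1 + 2, by have := r.2; omega⟩ * U ⟨s.1 + 2, by have := s.2; omega⟩)
        (U' r * U' s))
    (hAnn : Equivariant δ (U ⟨0, by omega⟩ * U ⟨1, by omega⟩) 0) :
    Equivariant δ (∑ p ∈ M, U p.1 * U p.2) (∑ p ∈ M', U' p.1 * U' p.2) ∧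
    CurvedDARel δ (∑ p ∈ M, U p.1 * U p.2) (∑ p ∈ M', U' p.1 * U' p.2) := by
  have hsplit := sum_eq_add_sum_addNat_two h01 Nat.zero_lt_two hM' hMform
    (fun p => U p.1 * U p.2)
  have hequiv : Equivariant δ (∑ p ∈ M, U p.1 * U p.2) (∑ p ∈ M', U' p.1 * U' p.2) := by
    rw [hsplit, ← zero_add (∑ p ∈ M', U' p.1 * U' p.2)]
    exact hAnn.add hadd (Equivariant.sum hadd fun q _ => hEq q.1 q.2)
  exact ⟨hequiv, hequiv.curvedDARel hDA⟩
end
end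

section
/- Suppose X is a type D structure over a curved algebra (B_1, μ_1) that is 'relevant', i.e., there is an A_∞-module Z over the dual algebra D_1 with ι ⊠ X ≃ Z ⊠ K_1, where K_1 is the canonical DD bimodule. If the holomorphic DA bimodule of the extended marked minimum satisfies DA(H^ex) ⊠ K_1 ≃ MarkedMin ⊠ K_1, and the marked-minimum bimodule satisfies the commutation relation MarkedMin ⊠ K_1 ≃ nMarkedMin ⊠ K_2 (where K_2 is the canonical DD bimodule for the output algebras), then Y = DA(H_mid) ⊠ X is uniquely characterized up to homotopy equivalence by ι ⊠ Y ≃ MarkedMin ⊠ ι ⊠ X, and Y is itself relevant via the module Z ⊠ nMarkedMin. -/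
/-- abstract form: objects of the relevant homotopy categories are
abstracted as types with equivalence relations, and the box-tensor operations as maps.

* `C1obj`, `C2obj`: type D structures over the subalgebras `C₁ ⊆ B₁`, `C₂ ⊆ B₂`;
* `B1obj`, `B2obj`: type D structures over `B₁`, `B₂`, with homotopy equivalence `eqB1`,
  `eqB2` (and `eqC2` on `C2obj`);
* `iota1 : C1obj → B1obj`, `iota2 : C2obj → B2obj`: extension of scalars `ι ⊠ −`;
* `DAmid : C1obj → C2obj`: `DA(H_mid) ⊠ −`; `DAex : B1obj → B2obj`: `DA(H^{ex}) ⊠ −`;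
* `MM : B1obj → B2obj`: `MarkedMin ⊠ −`;
* `M1`, `M2`: A∞-modules over the dual algebras `D₁`, `D₂`, with `nMM : M1 → M2` the
  functor `− ⊠ nMarkedMin`;
* `K1 : M1 → B1obj`, `K2 : M2 → B2obj`: pairing with the canonical DD bimodules;
* `K1DAex`, `K1MM : M1 → B2obj`: pairing with `DA(H^{ex}) ⊠ K₁` and `MarkedMin ⊠ K₁`.

Hypotheses: the computation `DA(H^{ex}) ⊠ K₁ ≃ MarkedMin ⊠ K₁`, the commutation
`MarkedMin ⊠ K₁ ≃ nMarkedMin ⊠ K₂`, associativity/commutativity of `⊠`, the extension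
compatibility `DA(H^{ex}) ∘ ι₁ ≃ ι₂ ∘ DA(H_mid)`, the fact that extension of scalars
reflects homotopy equivalence, and relevance of `X`: `ι₁ X ≃ Z ⊠ K₁` for some `Z`.

Conclusions: `Y = DA(H_mid) ⊠ X` satisfies `ι₂ Y ≃ MarkedMin ⊠ (ι₁ X)`, it is uniquely
characterized up to homotopy by this property, and it is relevant (via `Z ⊠ nMarkedMin`). -/
theorem stmt_17
    (C1obj C2obj B1obj B2obj M1 M2 : Type)
    (eqB1 : B1obj → B1obj → Prop) (eqB2 : B2obj → B2obj → Prop)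
    (eqC2 : C2obj → C2obj → Prop)
    (heqvB1 : Equivalence eqB1) (heqvB2 : Equivalence eqB2) (heqvC2 : Equivalence eqC2)
    (iota1 : C1obj → B1obj) (iota2 : C2obj → B2obj)
    (DAmid : C1obj → C2obj) (DAex : B1obj → B2obj) (MM : B1obj → B2obj)
    (nMM : M1 → M2)
    (K1 : M1 → B1obj) (K2 : M2 → B2obj) (K1DAex K1MM : M1 → B2obj)
    -- the functors are compatible with homotopy equivalence
    (hDAexCong : ∀ a b : B1obj, eqB1 a b → eqB2 (DAex a) (DAex b))
    (hMMCong : ∀ a b : B1obj, eqB1 a b → eqB2 (MM a) (MM b))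
    (hiota2Cong : ∀ a b : C2obj, eqC2 a b → eqB2 (iota2 a) (iota2 b))
    -- associativity/commutativity of the box tensor product with `K₁`
    (hDAcomm : ∀ Z : M1, eqB2 (DAex (K1 Z)) (K1DAex Z))
    (hMMcomm : ∀ Z : M1, eqB2 (MM (K1 Z)) (K1MM Z))
    -- the holomorphic computation `DA(H^{ex}) ⊠ K₁ ≃ MarkedMin ⊠ K₁`
    (hCompute : ∀ Z : M1, eqB2 (K1DAex Z) (K1MM Z))
    -- the commutation `MarkedMin ⊠ K₁ ≃ nMarkedMin ⊠ K₂`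
    (hnMM : ∀ Z : M1, eqB2 (K1MM Z) (K2 (nMM Z)))
    -- extension of scalars intertwines `DA(H^{ex})` and `DA(H_mid)`
    (hext : ∀ Y : C1obj, eqB2 (DAex (iota1 Y)) (iota2 (DAmid Y)))
    -- extension of scalars reflects homotopy equivalence
    (hrefl : ∀ Y Y' : C2obj, eqB2 (iota2 Y) (iota2 Y') → eqC2 Y Y')
    -- `X` is relevant
    (X : C1obj) (Z : M1) (hrel : eqB1 (iota1 X) (K1 Z)) :
    eqB2 (iota2 (DAmid X)) (MM (iota1 X)) ∧
    (∀ Y' : C2obj, eqB2 (iota2 Y') (MM (iota1 X)) → eqC2 Y' (DAmid X)) ∧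
    eqB2 (iota2 (DAmid X)) (K2 (nMM Z)) := by
  obtain ⟨rB2, sB2, tB2⟩ := heqvB2
  have h1 : eqB2 (iota2 (DAmid X)) (K1MM Z) :=
    tB2 (sB2 (hext X)) (tB2 (hDAexCong _ _ hrel) (tB2 (hDAcomm Z) (hCompute Z)))
  have hmain : eqB2 (iota2 (DAmid X)) (MM (iota1 X)) :=
    tB2 h1 (tB2 (sB2 (hMMcomm Z)) (hMMCong _ _ (heqvB1.symm hrel)))
  refine ⟨hmain, fun Y' hY' => hrefl _ _ (tB2 hY' (sB2 hmain)), tB2 h1 (hnMM Z)⟩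
end
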